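/- Let G be a bipartite finite simple graph on n vertices with maximum degree Δ(G) ≤ 4, and let the machine speeds be s₁ = s₂ = 3s and s₃ = s₄ = s for some real s > 0. Let (A, B, C, D) be a partition of the vertex set of G into four independent sets whose sizes pairwise differ by at most 1, ordered so that |A| ≥ |B| ≥ |C| ≥ |D|. Then max(|A|/s₁, |B|/s₂, |C|/s₃, |D|/s₄) ≤ 2·OPT, where OPT is the minimum over all partitions of the vertex set of G into four independent sets J₁, J₂, J₃, J₄ of the makespan max(|J₁|/s₁, |J₂|/s₂, |J₃|/s₃, |J₄|/s₄). -/

import Mathlib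

/-!
The bound is pure counting. If `T` is the makespan of any partition, the four classes hold at
most `3sT, 3sT, sT, sT` vertices, so `n ≤ 8sT`. An equitable coloring has all classes of size
`⌈n/4⌉` or `⌊n/4⌋`, and integrality upgrades `n ≤ 8sT` to `|A| ≤ 6sT` and `|C| ≤ 2sT`, which is
the factor 2 on both the fast and the slow machines.
-/

/-- A finset of vertices is independent: no two of its members are adjacent. -/
def IsIndep {V : Type*} (G : SimpleGraph V) (s : Finset V) : Prop :=
  ∀ u ∈ s, ∀ v ∈ s, ¬ G.Adj u v

open Finset

theorem Finset.card_union_union_union_of_disjoint {α : Type*} [DecidableEq α]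
    {A B C D : Finset α} (hAB : Disjoint A B) (hAC : Disjoint A C) (hAD : Disjoint A D)
    (hBC : Disjoint B C) (hBD : Disjoint B D) (hCD : Disjoint C D) :
    #(A ∪ B ∪ C ∪ D) = #A + #B + #C + #D := by
  rw [card_union_of_disjoint (by simp [disjoint_union_left, hAD, hBD, hCD]),
    card_union_of_disjoint (by simp [disjoint_union_left, hAC, hBC]),
    card_union_of_disjoint hAB]

noncomputable def makespan (s : ℝ) (a b c d : ℕ) : ℝ :=
  max (max ((a : ℝ) / (3 * s)) ((b : ℝ) / (3 * s))) (max ((c : ℝ) / s) ((d : ℝ) / s))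

theorem makespan_le_iff {s T : ℝ} (hs : 0 < s) {a b c d : ℕ} :
    makespan s a b c d ≤ T ↔
      a ≤ 3 * (s * T) ∧ b ≤ 3 * (s * T) ∧ c ≤ s * T ∧ d ≤ s * T := by
  have h3s : (0 : ℝ) < 3 * s := by positivity
  simp only [makespan, max_le_iff, div_le_iff₀ hs, div_le_iff₀ h3s]
  constructor
  · rintro ⟨⟨ha, hb⟩, hc, hd⟩
    exact ⟨by linarith, by linarith, by linarith, by linarith⟩
  · rintro ⟨ha, hb, hc, hd⟩
    exact ⟨⟨by linarith, by linarith⟩, by linarith, by linarith⟩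

theorem balanced_loads_le {a b c d j₁ j₂ j₃ j₄ : ℕ} {x : ℝ}
    (hdc : d ≤ c) (hcb : c ≤ b) (hba : b ≤ a) (had : a ≤ d + 1)
    (hsum : a + b + c + d = j₁ + j₂ + j₃ + j₄)
    (h₁ : j₁ ≤ 3 * x) (h₂ : j₂ ≤ 3 * x) (h₃ : j₃ ≤ x) (h₄ : j₄ ≤ x) :
    a ≤ 6 * x ∧ c ≤ 2 * x := by
  constructor
  · by_contra! h
    have n₁ : 2 * j₁ < a := by exact_mod_cast (by linarith : (2 * j₁ : ℝ) < a)
    have n₂ : 2 * j₂ < a := by exact_mod_cast (by linarith : (2 * j₂ : ℝ) < a)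
    have n₃ : 6 * j₃ < a := by exact_mod_cast (by linarith : (6 * j₃ : ℝ) < a)
    have n₄ : 6 * j₄ < a := by exact_mod_cast (by linarith : (6 * j₄ : ℝ) < a)
    omega
  · by_contra! h
    have n₁ : 2 * j₁ < 3 * c := by exact_mod_cast (by linarith : (2 * j₁ : ℝ) < 3 * c)
    have n₂ : 2 * j₂ < 3 * c := by exact_mod_cast (by linarith : (2 * j₂ : ℝ) < 3 * c)
    have n₃ : 2 * j₃ < c := by exact_mod_cast (by linarith : (2 * j₃ : ℝ) < c)
    have n₄ : 2 * j₄ < c := by exact_mod_cast (by linarith : (2 * j₄ : ℝ) < c)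
    omega

theorem makespan_le_two_mul_of_balanced {s : ℝ} (hs : 0 < s) {a b c d j₁ j₂ j₃ j₄ : ℕ}
    (hdc : d ≤ c) (hcb : c ≤ b) (hba : b ≤ a) (had : a ≤ d + 1)
    (hsum : a + b + c + d = j₁ + j₂ + j₃ + j₄) :
    makespan s a b c d ≤ 2 * makespan s j₁ j₂ j₃ j₄ := by
  obtain ⟨h₁, h₂, h₃, h₄⟩ := (makespan_le_iff hs).1 (le_refl (makespan s j₁ j₂ j₃ j₄))
  obtain ⟨ha, hc⟩ := balanced_loads_le hdc hcb hba had hsum h₁ h₂ h₃ h₄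
  have hb : (b : ℝ) ≤ a := by exact_mod_cast hba
  have hd : (d : ℝ) ≤ c := by exact_mod_cast hdc
  exact (makespan_le_iff hs).2 ⟨by linarith, by linarith, by linarith, by linarith⟩

theorem stmt_11_general {V : Type*} [Fintype V] [DecidableEq V] (G : SimpleGraph V)
    (s : ℝ) (hs : 0 < s)
    (A B C D : Finset V)
    (hAB : Disjoint A B) (hAC : Disjoint A C) (hAD : Disjoint A D)
    (hBC : Disjoint B C) (hBD : Disjoint B D) (hCD : Disjoint C D)
    (hcover : A ∪ B ∪ C ∪ D = Finset.univ)
    (hord : D.card ≤ C.card ∧ C.card ≤ B.card ∧ B.card ≤ A.card)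
    (heq : (A.card : ℤ) - D.card ≤ 1) :
    ∀ J₁ J₂ J₃ J₄ : Finset V,
      IsIndep G J₁ → IsIndep G J₂ → IsIndep G J₃ → IsIndep G J₄ →
      Disjoint J₁ J₂ → Disjoint J₁ J₃ → Disjoint J₁ J₄ →
      Disjoint J₂ J₃ → Disjoint J₂ J₄ → Disjoint J₃ J₄ →
      J₁ ∪ J₂ ∪ J₃ ∪ J₄ = Finset.univ →
      max (max ((A.card : ℝ) / (3 * s)) ((B.card : ℝ) / (3 * s)))
          (max ((C.card : ℝ) / s) ((D.card : ℝ) / s)) ≤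
        2 * max (max ((J₁.card : ℝ) / (3 * s)) ((J₂.card : ℝ) / (3 * s)))
                (max ((J₃.card : ℝ) / s) ((J₄.card : ℝ) / s)) := by
  intro J₁ J₂ J₃ J₄ _ _ _ _ hJ₁₂ hJ₁₃ hJ₁₄ hJ₂₃ hJ₂₄ hJ₃₄ hJcover
  obtain ⟨hDC, hCB, hBA⟩ := hord
  have hsum : #A + #B + #C + #D = #J₁ + #J₂ + #J₃ + #J₄ := by
    rw [← card_union_union_union_of_disjoint hAB hAC hAD hBC hBD hCD, hcover,
      ← card_union_union_union_of_disjoint hJ₁₂ hJ₁₃ hJ₁₄ hJ₂₃ hJ₂₄ hJ₃₄, hJcover]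
  exact makespan_le_two_mul_of_balanced hs hDC hCB hBA (by omega) hsum

/-- Accuracy of Algorithm 3: for a bipartite finite simple graph `G` with maximum degree at
most 4 and machine speeds `s₁ = s₂ = 3s`, `s₃ = s₄ = s` (`s > 0`), every equitable
4-coloring `(A, B, C, D)` of `G` with `|A| ≥ |B| ≥ |C| ≥ |D|` yields a makespan at most
twice the makespan of every partition of the vertex set into four independent sets. -/
theorem stmt_11 {V : Type*} [Fintype V] [DecidableEq V] (G : SimpleGraph V)
    [DecidableRel G.Adj] (hbip : G.Colorable 2) (hΔ : G.maxDegree ≤ 4)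
    (s : ℝ) (hs : 0 < s)
    (A B C D : Finset V)
    (hA : IsIndep G A) (hB : IsIndep G B) (hC : IsIndep G C) (hD : IsIndep G D)
    (hAB : Disjoint A B) (hAC : Disjoint A C) (hAD : Disjoint A D)
    (hBC : Disjoint B C) (hBD : Disjoint B D) (hCD : Disjoint C D)
    (hcover : A ∪ B ∪ C ∪ D = Finset.univ)
    (hord : D.card ≤ C.card ∧ C.card ≤ B.card ∧ B.card ≤ A.card)
    (heq : (A.card : ℤ) - D.card ≤ 1) :
    ∀ J₁ J₂ J₃ J₄ : Finset V,
      IsIndep G J₁ → IsIndep G J₂ → IsIndep G J₃ → IsIndep G J₄ →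
      Disjoint J₁ J₂ → Disjoint J₁ J₃ → Disjoint J₁ J₄ →
      Disjoint J₂ J₃ → Disjoint J₂ J₄ → Disjoint J₃ J₄ →
      J₁ ∪ J₂ ∪ J₃ ∪ J₄ = Finset.univ →
      max (max ((A.card : ℝ) / (3 * s)) ((B.card : ℝ) / (3 * s)))
          (max ((C.card : ℝ) / s) ((D.card : ℝ) / s)) ≤
        2 * max (max ((J₁.card : ℝ) / (3 * s)) ((J₂.card : ℝ) / (3 * s)))
                (max ((J₃.card : ℝ) / s) ((J₄.card : ℝ) / s)) :=
  stmt_11_general G s hs A B C D hAB hAC hAD hBC hBD hCD hcover hord heq
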